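/- An inversion sequence σ avoiding 201 and 210 has exactly 2^{ℓ(σ) + [R(σ) ≠ ∅]} children avoiding 201 and 210 in the generating tree growing on the left, where ℓ(σ) is the number of leading zeros of σ and R(σ) is the set of non-leading zeros. -/
import Mathlib


def child {n : ℕ} (σ : Fin n → ℕ) (Z : Finset (Fin n)) : Fin (n + 1) → ℕ :=
  Fin.cases 0 (fun i => σ i + (if 0 < σ i then 1 else 0) + (if i ∈ Z then 1 else 0))

def Contains201 {n : ℕ} (σ : Fin n → ℕ) : Prop :=
  ∃ i j k : Fin n, i < j ∧ j < k ∧ σ j < σ k ∧ σ k < σ i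

def Contains210 {n : ℕ} (σ : Fin n → ℕ) : Prop :=
  ∃ i j k : Fin n, i < j ∧ j < k ∧ σ k < σ j ∧ σ j < σ i

def Zeros {n : ℕ} (σ : Fin n → ℕ) : Finset (Fin n) :=
  Finset.univ.filter fun i => σ i = 0

def LeadZeros {n : ℕ} (σ : Fin n → ℕ) : Finset (Fin n) :=
  Finset.univ.filter fun i => ∀ j ≤ i, σ j = 0

open Classical

lemma child_succ {n : ℕ} (σ : Fin n → ℕ) (Z : Finset (Fin n)) (i : Fin n) :
    child σ Z i.succ = σ i + (if 0 < σ i then 1 else 0) + (if i ∈ Z then 1 else 0) := by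
  simp [child]

lemma mem_Zeros {n : ℕ} {σ : Fin n → ℕ} {i : Fin n} : i ∈ Zeros σ ↔ σ i = 0 := by
  simp [Zeros]

lemma mem_R_iff {n : ℕ} {σ : Fin n → ℕ} {j : Fin n} :
    j ∈ Zeros σ \ LeadZeros σ ↔ σ j = 0 ∧ ∃ i, i < j ∧ 0 < σ i := by
  simp only [Finset.mem_sdiff, mem_Zeros, LeadZeros, Finset.mem_filter, Finset.mem_univ,
    true_and, not_forall]
  constructor
  · rintro ⟨hj, i, hij, hi⟩
    refine ⟨hj, i, ?_, Nat.pos_of_ne_zero hi⟩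
    rcases lt_or_eq_of_le hij with h | h
    · exact h
    · exact absurd (h ▸ hj) hi
  · rintro ⟨hj, i, hij, hi⟩
    exact ⟨hj, i, le_of_lt hij, by omega⟩

lemma child_inj {n : ℕ} {σ : Fin n → ℕ} {Z₁ Z₂ : Finset (Fin n)}
    (h₁ : Z₁ ⊆ Zeros σ) (h₂ : Z₂ ⊆ Zeros σ) (h : child σ Z₁ = child σ Z₂) : Z₁ = Z₂ := by
  ext i
  by_cases hz : σ i = 0
  · have := congrFun h i.succ
    rw [child_succ, child_succ, hz] at this
    constructor <;> intro hm <;> by_contra hc <;> simp [hm, hc] at this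
  · constructor <;> intro hm
    · exact absurd (mem_Zeros.mp (h₁ hm)) hz
    · exact absurd (mem_Zeros.mp (h₂ hm)) hz


lemma childv0 {n : ℕ} {σ : Fin n → ℕ} {Z : Finset (Fin n)} {i : Fin n}
    (h : σ i = 0) (h' : i ∉ Z) : child σ Z i.succ = 0 := by
  rw [child_succ]; simp [h, h']

lemma childv1 {n : ℕ} {σ : Fin n → ℕ} {Z : Finset (Fin n)} {i : Fin n}
    (h : σ i = 0) (h' : i ∈ Z) : child σ Z i.succ = 1 := by
  rw [child_succ]; simp [h, h']

lemma childv2 {n : ℕ} {σ : Fin n → ℕ} {Z : Finset (Fin n)} {i : Fin n}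
    (h : 0 < σ i) : 2 ≤ child σ Z i.succ := by
  rw [child_succ]; split <;> split <;> omega

/-- characterization -/
lemma avoid_child_iff {n : ℕ} {σ : Fin n → ℕ}
    (h201 : ¬ Contains201 σ) (h210 : ¬ Contains210 σ)
    {Z : Finset (Fin n)} (hZ : Z ⊆ Zeros σ) :
    (¬ Contains201 (child σ Z) ∧ ¬ Contains210 (child σ Z)) ↔
      ∀ j ∈ Zeros σ \ LeadZeros σ, ∀ k ∈ Zeros σ \ LeadZeros σ, (j ∈ Z ↔ k ∈ Z) := by
  have hZz : ∀ i ∈ Z, σ i = 0 := fun i hi => mem_Zeros.mp (hZ hi)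
  constructor
  · rintro ⟨hc201, hc210⟩ j hj k hk
    rw [mem_R_iff] at hj hk
    obtain ⟨hj0, ij, hij, hijpos⟩ := hj
    obtain ⟨hk0, ik, hik, hikpos⟩ := hk
    by_contra hne
    rcases Classical.em (j ∈ Z) with hjZ | hjZ
    · -- j ∈ Z, k ∉ Z
      have hkZ : k ∉ Z := fun h => hne ⟨fun _ => h, fun _ => hjZ⟩
      rcases lt_trichotomy j k with hlt | heq | hgt
      · -- i < j < k : 210 in child
        refine hc210 ⟨ij.succ, j.succ, k.succ, Fin.succ_lt_succ_iff.mpr hij,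
          Fin.succ_lt_succ_iff.mpr hlt, ?_, ?_⟩
        · rw [childv0 hk0 hkZ, childv1 hj0 hjZ]; omega
        · rw [childv1 hj0 hjZ]; have := childv2 (Z := Z) hijpos; omega
      · exact hne (heq ▸ Iff.rfl)
      · -- i < k < j : 201 in child (middle k ∉ Z has value 0, later j ∈ Z value 1)
        refine hc201 ⟨ik.succ, k.succ, j.succ, Fin.succ_lt_succ_iff.mpr hik,
          Fin.succ_lt_succ_iff.mpr hgt, ?_, ?_⟩
        · rw [childv0 hk0 hkZ, childv1 hj0 hjZ]; omega
        · rw [childv1 hj0 hjZ]; have := childv2 (Z := Z) hikpos; omega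
    · -- j ∉ Z, k ∈ Z
      have hkZ : k ∈ Z := by
        by_contra h; exact hne ⟨fun h' => absurd h' hjZ, fun h' => absurd h' h⟩
      rcases lt_trichotomy j k with hlt | heq | hgt
      · refine hc201 ⟨ij.succ, j.succ, k.succ, Fin.succ_lt_succ_iff.mpr hij,
          Fin.succ_lt_succ_iff.mpr hlt, ?_, ?_⟩
        · rw [childv0 hj0 hjZ, childv1 hk0 hkZ]; omega
        · rw [childv1 hk0 hkZ]; have := childv2 (Z := Z) hijpos; omega
      · exact hne (heq ▸ Iff.rfl)
      · refine hc210 ⟨ik.succ, k.succ, j.succ, Fin.succ_lt_succ_iff.mpr hik,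
          Fin.succ_lt_succ_iff.mpr hgt, ?_, ?_⟩
        · rw [childv0 hj0 hjZ, childv1 hk0 hkZ]; omega
        · rw [childv1 hk0 hkZ]; have := childv2 (Z := Z) hikpos; omega
  · intro hconst
    constructor
    · rintro ⟨a, b, c, hab, hbc, hv1, hv2⟩
      have ha0 : a ≠ 0 := by
        rintro rfl; simp only [child, Fin.cases_zero] at hv2; omega
      obtain ⟨i, rfl⟩ := Fin.exists_succ_eq.mpr ha0
      have hb0 : b ≠ 0 := by rintro rfl; exact absurd hab (Fin.not_lt_zero _)
      obtain ⟨j, rfl⟩ := Fin.exists_succ_eq.mpr hb0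
      have hc0 : c ≠ 0 := by
        rintro rfl; exact absurd hbc (by exact Fin.not_lt_zero _)
      obtain ⟨k, rfl⟩ := Fin.exists_succ_eq.mpr hc0
      rw [Fin.succ_lt_succ_iff] at hab hbc
      simp only [child_succ] at hv1 hv2
      -- case analysis
      by_cases hi : σ i = 0
      · -- value at i ≤ 1, contradiction since v j < v k < v i needs v i ≥ 2
        have hiZ : (if i ∈ Z then (1:ℕ) else 0) ≤ 1 := by split <;> omega
        simp [hi] at hv2 hv1; omega
      · have hipos : 0 < σ i := Nat.pos_of_ne_zero hi
        have hiZ' : i ∉ Z := fun h => hi (hZz i h)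
        by_cases hk : σ k = 0
        · -- then v k ≤ 1, v j < v k forces v k = 1 (k ∈ Z), v j = 0 (σ j = 0, j ∉ Z)
          have hkZ : k ∈ Z := by
            by_contra h; simp [hk, h] at hv1
          have hj0 : σ j = 0 ∧ j ∉ Z := by
            simp [hk, hkZ] at hv1
            constructor
            · by_contra h; have := Nat.pos_of_ne_zero h; omega
            · intro h; simp [h] at hv1
          have hjR : j ∈ Zeros σ \ LeadZeros σ := mem_R_iff.mpr ⟨hj0.1, i, hab, hipos⟩
          have hkR : k ∈ Zeros σ \ LeadZeros σ := mem_R_iff.mpr ⟨hk, i, lt_trans hab hbc, hipos⟩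
          exact hj0.2 ((hconst j hjR k hkR).mpr hkZ)
        · have hkpos : 0 < σ k := Nat.pos_of_ne_zero hk
          have hkZ' : k ∉ Z := fun h => hk (hZz k h)
          by_cases hj : σ j = 0
          · -- σ had 201 : σ j = 0 < σ k < σ i
            refine h201 ⟨i, j, k, hab, hbc, ?_, ?_⟩
            · omega
            · simp [hipos, hkpos, hiZ', hkZ'] at hv2; omega
          · have hjpos : 0 < σ j := Nat.pos_of_ne_zero hj
            have hjZ' : j ∉ Z := fun h => hj (hZz j h)
            refine h201 ⟨i, j, k, hab, hbc, ?_, ?_⟩ <;>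
              simp [hipos, hjpos, hkpos, hiZ', hjZ', hkZ'] at hv1 hv2 <;> omega
    · rintro ⟨a, b, c, hab, hbc, hv1, hv2⟩
      have ha0 : a ≠ 0 := by
        rintro rfl; simp only [child, Fin.cases_zero] at hv2; omega
      obtain ⟨i, rfl⟩ := Fin.exists_succ_eq.mpr ha0
      have hb0 : b ≠ 0 := by rintro rfl; exact absurd hab (Fin.not_lt_zero _)
      obtain ⟨j, rfl⟩ := Fin.exists_succ_eq.mpr hb0
      have hc0 : c ≠ 0 := by rintro rfl; exact absurd hbc (Fin.not_lt_zero _)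
      obtain ⟨k, rfl⟩ := Fin.exists_succ_eq.mpr hc0
      rw [Fin.succ_lt_succ_iff] at hab hbc
      simp only [child_succ] at hv1 hv2
      by_cases hi : σ i = 0
      · have hiZ : (if i ∈ Z then (1:ℕ) else 0) ≤ 1 := by split <;> omega
        simp [hi] at hv2 hv1; omega
      · have hipos : 0 < σ i := Nat.pos_of_ne_zero hi
        have hiZ' : i ∉ Z := fun h => hi (hZz i h)
        by_cases hj : σ j = 0
        · -- v j ≤ 1; v k < v j forces v j = 1 (j ∈ Z), v k = 0 (σ k = 0, k ∉ Z)
          have hjZ : j ∈ Z := by by_contra h; simp [hj, h] at hv1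
          have hk0 : σ k = 0 ∧ k ∉ Z := by
            simp [hj, hjZ] at hv1
            constructor
            · by_contra h; have := Nat.pos_of_ne_zero h; omega
            · intro h; simp [h] at hv1
          have hjR : j ∈ Zeros σ \ LeadZeros σ := mem_R_iff.mpr ⟨hj, i, hab, hipos⟩
          have hkR : k ∈ Zeros σ \ LeadZeros σ := mem_R_iff.mpr ⟨hk0.1, i, lt_trans hab hbc, hipos⟩
          exact hk0.2 ((hconst j hjR k hkR).mp hjZ)
        · have hjpos : 0 < σ j := Nat.pos_of_ne_zero hj
          have hjZ' : j ∉ Z := fun h => hj (hZz j h)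
          by_cases hk : σ k = 0
          · -- σ had 210 : σ k = 0 < σ j < σ i
            refine h210 ⟨i, j, k, hab, hbc, ?_, ?_⟩
            · omega
            · simp [hipos, hjpos, hiZ', hjZ'] at hv2; omega
          · have hkpos : 0 < σ k := Nat.pos_of_ne_zero hk
            have hkZ' : k ∉ Z := fun h => hk (hZz k h)
            refine h210 ⟨i, j, k, hab, hbc, ?_, ?_⟩ <;>
              simp [hipos, hjpos, hkpos, hiZ', hjZ', hkZ'] at hv1 hv2 <;> omega

lemma LeadZeros_subset {n : ℕ} (σ : Fin n → ℕ) : LeadZeros σ ⊆ Zeros σ := by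
  intro i hi
  simp only [LeadZeros, Finset.mem_filter, Finset.mem_univ, true_and] at hi
  exact mem_Zeros.mpr (hi i le_rfl)


open Classical in
/-- A `{201,210}`-avoiding inversion sequence `σ` has exactly
`2 ^ (ℓ(σ) + [R(σ) ≠ ∅])` children avoiding 201 and 210 in the generating tree
growing on the left. -/
theorem card_avoiding_children (n : ℕ) (σ : Fin n → ℕ) (hσ : ∀ i, σ i ≤ i.val)
    (h201 : ¬ Contains201 σ) (h210 : ¬ Contains210 σ) :
    ((((Zeros σ).powerset.filter fun Z =>
          ¬ Contains201 (child σ Z) ∧ ¬ Contains210 (child σ Z)).image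
        fun Z => child σ Z).card)
      = 2 ^ ((LeadZeros σ).card +
          if Zeros σ \ LeadZeros σ ≠ ∅ then 1 else 0) := by
  classical
  have hLZ : LeadZeros σ ⊆ Zeros σ := LeadZeros_subset σ
  rw [Finset.card_image_of_injOn (fun Z₁ h₁ Z₂ h₂ h => by
    exact child_inj (Finset.mem_powerset.mp (Finset.mem_filter.mp h₁).1)
      (Finset.mem_powerset.mp (Finset.mem_filter.mp h₂).1) h)]
  have hfe : ((Zeros σ).powerset.filter fun Z =>
          ¬ Contains201 (child σ Z) ∧ ¬ Contains210 (child σ Z))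
      = (Zeros σ).powerset.filter fun Z =>
          ∀ j ∈ Zeros σ \ LeadZeros σ, ∀ k ∈ Zeros σ \ LeadZeros σ, (j ∈ Z ↔ k ∈ Z) := by
    apply Finset.filter_congr
    intro Z hZ
    exact avoid_child_iff h201 h210 (Finset.mem_powerset.mp hZ)
  rw [hfe]
  by_cases hR : Zeros σ \ LeadZeros σ = ∅
  · have hZL : Zeros σ = LeadZeros σ :=
      Finset.Subset.antisymm (Finset.sdiff_eq_empty_iff_subset.mp hR) hLZ
    rw [Finset.filter_true_of_mem (fun Z _ => by intro j hj; rw [hR] at hj; simp at hj)]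
    rw [Finset.card_powerset, if_neg (fun h => h hR), hZL, Nat.add_zero]
  · obtain ⟨r, hrmem⟩ := Finset.nonempty_iff_ne_empty.mpr hR
    have hrL : r ∉ LeadZeros σ := (Finset.mem_sdiff.mp hrmem).2
    have key : ((Zeros σ).powerset.filter fun Z =>
          ∀ j ∈ Zeros σ \ LeadZeros σ, ∀ k ∈ Zeros σ \ LeadZeros σ, (j ∈ Z ↔ k ∈ Z))
        = (LeadZeros σ).powerset ∪
          (LeadZeros σ).powerset.image (· ∪ (Zeros σ \ LeadZeros σ)) := by
      ext Z
      simp only [Finset.mem_filter, Finset.mem_powerset, Finset.mem_union, Finset.mem_image]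
      constructor
      · rintro ⟨hZsub, hconst⟩
        by_cases hrZ : r ∈ Z
        · right
          refine ⟨Z \ (Zeros σ \ LeadZeros σ), ?_, ?_⟩
          · intro x hx
            obtain ⟨hx1, hx2⟩ := Finset.mem_sdiff.mp hx
            have := hZsub hx1
            by_contra hxl
            exact hx2 (Finset.mem_sdiff.mpr ⟨this, hxl⟩)
          · -- Z \ R ∪ R = Z since R ⊆ Z
            have hRZ : Zeros σ \ LeadZeros σ ⊆ Z := fun k hk =>
              (hconst r hrmem k hk).mp hrZ
            rw [Finset.sdiff_union_of_subset hRZ]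
        · left
          intro x hx
          have hxz := hZsub hx
          by_contra hxl
          have hxR : x ∈ Zeros σ \ LeadZeros σ := Finset.mem_sdiff.mpr ⟨hxz, hxl⟩
          exact hrZ ((hconst x hxR r hrmem).mp hx)
      · rintro (hZL | ⟨T, hT, rfl⟩)
        · refine ⟨hZL.trans hLZ, fun j hj k hk => ?_⟩
          have hj' : j ∉ Z := fun h => (Finset.mem_sdiff.mp hj).2 (hZL h)
          have hk' : k ∉ Z := fun h => (Finset.mem_sdiff.mp hk).2 (hZL h)
          simp [hj', hk']
        · refine ⟨?_, fun j hj k hk => ?_⟩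
          · intro x hx
            rcases Finset.mem_union.mp hx with h | h
            · exact hLZ (hT h)
            · exact (Finset.mem_sdiff.mp h).1
          · simp [Finset.mem_union, Finset.mem_sdiff.mp hj, Finset.mem_sdiff.mp hk,
              (Finset.mem_sdiff.mp hj).2, (Finset.mem_sdiff.mp hk).2, hj, hk]
    rw [key]
    have hdisj : Disjoint ((LeadZeros σ).powerset)
        ((LeadZeros σ).powerset.image (· ∪ (Zeros σ \ LeadZeros σ))) := by
      rw [Finset.disjoint_left]
      rintro Z hZ hZ'
      obtain ⟨T, hT, rfl⟩ := Finset.mem_image.mp hZ'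
      have : r ∈ T ∪ (Zeros σ \ LeadZeros σ) := Finset.mem_union_right _ hrmem
      exact hrL (Finset.mem_powerset.mp hZ this)
    rw [Finset.card_union_of_disjoint hdisj, Finset.card_powerset]
    have himg : ((LeadZeros σ).powerset.image (· ∪ (Zeros σ \ LeadZeros σ))).card
        = 2 ^ (LeadZeros σ).card := by
      rw [Finset.card_image_of_injOn, Finset.card_powerset]
      intro T₁ h₁' T₂ h₂' h
      have h₁ : T₁ ∈ (LeadZeros σ).powerset := h₁'
      have h₂ : T₂ ∈ (LeadZeros σ).powerset := h₂'
      have h' : T₁ ∪ (Zeros σ \ LeadZeros σ) = T₂ ∪ (Zeros σ \ LeadZeros σ) := h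
      have key' : ∀ T : Finset (Fin n), T ∈ (LeadZeros σ).powerset →
          (T ∪ (Zeros σ \ LeadZeros σ)) \ (Zeros σ \ LeadZeros σ) = T := by
        intro T hT
        rw [Finset.union_sdiff_right]
        apply Finset.sdiff_eq_self_of_disjoint
        rw [Finset.disjoint_right]
        intro x hx
        exact fun h' => (Finset.mem_sdiff.mp hx).2 (Finset.mem_powerset.mp hT h')
      calc T₁ = (T₁ ∪ (Zeros σ \ LeadZeros σ)) \ (Zeros σ \ LeadZeros σ) := (key' T₁ h₁).symm
        _ = (T₂ ∪ (Zeros σ \ LeadZeros σ)) \ (Zeros σ \ LeadZeros σ) := by rw [h']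
        _ = T₂ := key' T₂ h₂
    rw [himg, if_pos hR]
    ring
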